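/- Let h(t) = ∫_0^t cos(s)/√(t-s) ds and H_c(t) = ∫_0^t h(s) cos(s) ds. Then H_c(t) = (1/4)·{√(2π)·C(√(2/π)√t)·(2t + sin 2t) − √(2π)·S(√(2/π)√t)·cos 2t − 2√t sin t} for all t ≥ 0. -/

import Mathlib

open Real MeasureTheory intervalIntegral

/-- The Fresnel cosine integral `C(z) = ∫_0^z cos(π s²/2) ds`. -/
noncomputable def fresnelC (z : ℝ) : ℝ := ∫ s in (0:ℝ)..z, Real.cos (π * s ^ 2 / 2)

/-- The Fresnel sine integral `S(z) = ∫_0^z sin(π s²/2) ds`. -/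
noncomputable def fresnelS (z : ℝ) : ℝ := ∫ s in (0:ℝ)..z, Real.sin (π * s ^ 2 / 2)

/-- The Abel transform of `cos`: `h(t) = ∫_0^t cos s/√(t-s) ds`. -/
noncomputable def abelCos (t : ℝ) : ℝ := ∫ s in (0:ℝ)..t, Real.cos s / Real.sqrt (t - s)

/-!
The substitution `s = t - π u² / 2` turns the Abel integral into Fresnel integrals:
`h t = √(2π) (C w · cos t + S w · sin t)` with `w = √(2/π) √t`.
Since `d/dt C w = cos t / √(2πt)` and `d/dt S w = sin t / √(2πt)`, the right-hand side
of the claim has derivative `h t · cos t` for `t > 0`, and it vanishes at `t = 0`.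
-/

lemma pi_mul_sq_sqrt_two_div_pi_mul_sqrt {x : ℝ} (hx : 0 ≤ x) :
    π * (√(2 / π) * √x) ^ 2 / 2 = x := by
  rw [mul_pow, sq_sqrt (by positivity), sq_sqrt hx]
  field_simp

lemma sqrt_two_mul_pi_mul_sqrt_two_div_pi : √(2 * π) * √(2 / π) = 2 := by
  rw [← sqrt_mul (by positivity), show 2 * π * (2 / π) = 2 ^ 2 by field_simp,
    sqrt_sq zero_le_two]

lemma sqrt_pi_mul_sq_div_two_mul_sqrt_two_mul_pi {u : ℝ} (hu : 0 ≤ u) :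
    √(π * u ^ 2 / 2) * √(2 * π) = π * u := by
  rw [← sqrt_mul (by positivity), show π * u ^ 2 / 2 * (2 * π) = (π * u) ^ 2 by ring,
    sqrt_sq (by positivity)]

theorem integral_div_sqrt_sub_eq (φ : ℝ → ℝ) {t : ℝ} (ht : 0 ≤ t) :
    ∫ s in (0:ℝ)..t, φ s / √(t - s)
      = √(2 * π) * ∫ u in (0:ℝ)..√(2 / π) * √t, φ (t - π * u ^ 2 / 2) := by
  -- A monotone change of variables needs no integrability,
  -- so the singularity at `s = t` is harmless.
  have hwt := pi_mul_sq_sqrt_two_div_pi_mul_sqrt ht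
  set w := √(2 / π) * √t
  have hw : 0 ≤ w := by positivity
  have hsubst := integral_comp_mul_deriv_of_deriv_nonpos (a := 0) (b := w)
    (f := fun u => t - π * u ^ 2 / 2) (f' := fun u => -(π * u))
    (g := fun s => φ s / √(t - s)) (by fun_prop)
    (fun u _ => ((((hasDerivAt_pow 2 u).const_mul π).div_const 2).const_sub t).congr_deriv
      (by ring))
    (fun u hu => by simp only [min_eq_left hw] at hu; nlinarith [pi_pos, hu.1])
  simp only [hwt, Function.comp_apply] at hsubst
  calc ∫ s in (0:ℝ)..t, φ s / √(t - s)
      = -∫ u in (0:ℝ)..w,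
          φ (t - π * u ^ 2 / 2) / √(t - (t - π * u ^ 2 / 2)) * -(π * u) := by
        rw [hsubst]
        simp only [zero_pow two_ne_zero, mul_zero, zero_div, sub_zero, sub_self]
        rw [integral_symm]
    _ = ∫ u in (0:ℝ)..w, √(2 * π) * φ (t - π * u ^ 2 / 2) := by
        rw [← intervalIntegral.integral_neg]
        refine integral_congr_ae (Filter.Eventually.of_forall fun u hu => ?_)
        rw [Set.uIoc_of_le hw] at hu
        have hroot := sqrt_pi_mul_sq_div_two_mul_sqrt_two_mul_pi hu.1.le
        have : 0 < √(π * u ^ 2 / 2) := sqrt_pos.2 (by have := hu.1; positivity)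
        rw [sub_sub_cancel, ← hroot]
        field_simp
    _ = _ := intervalIntegral.integral_const_mul _ _

theorem abelCos_eq {t : ℝ} (ht : 0 ≤ t) :
    abelCos t = √(2 * π) * (fresnelC (√(2 / π) * √t) * cos t
      + fresnelS (√(2 / π) * √t) * sin t) := by
  rw [abelCos, integral_div_sqrt_sub_eq _ ht, fresnelC, fresnelS,
    ← intervalIntegral.integral_mul_const, ← intervalIntegral.integral_mul_const,
    ← intervalIntegral.integral_add (Continuous.intervalIntegrable (by fun_prop) _ _)
      (Continuous.intervalIntegrable (by fun_prop) _ _)]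
  simp only [cos_sub]
  congr 2 with u
  ring

theorem hasDerivAt_integral_sqrt {φ : ℝ → ℝ} (hφ : Continuous φ) {x : ℝ} (hx : 0 < x) :
    HasDerivAt (fun y => ∫ s in (0:ℝ)..√(2 / π) * √y, φ (π * s ^ 2 / 2))
      (φ x / (√(2 * π) * √x)) x := by
  have hcont : Continuous fun s => φ (π * s ^ 2 / 2) := hφ.comp (by fun_prop)
  have h := (hcont.integral_hasStrictDerivAt 0 _).hasDerivAt.comp x
    ((hasDerivAt_sqrt hx.ne').const_mul √(2 / π))
  simp only [pi_mul_sq_sqrt_two_div_pi_mul_sqrt hx.le] at h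
  refine h.congr_deriv ?_
  have : 0 < √x := sqrt_pos.2 hx
  have : 0 < √(2 * π) := sqrt_pos.2 (by positivity)
  field_simp
  linear_combination φ x * sqrt_two_mul_pi_mul_sqrt_two_div_pi

@[fun_prop]
theorem continuous_fresnelC : Continuous fresnelC :=
  continuous_primitive (fun _ _ => Continuous.intervalIntegrable (by fun_prop) _ _) 0

@[fun_prop]
theorem continuous_fresnelS : Continuous fresnelS :=
  continuous_primitive (fun _ _ => Continuous.intervalIntegrable (by fun_prop) _ _) 0

theorem continuousOn_abelCos : ContinuousOn abelCos (Set.Ici 0) :=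
  (by fun_prop : Continuous fun t => √(2 * π) * (fresnelC (√(2 / π) * √t) * cos t
      + fresnelS (√(2 / π) * √t) * sin t)).continuousOn.congr fun _ ht => abelCos_eq ht

noncomputable def hcClosedForm (t : ℝ) : ℝ :=
  1 / 4 * (√(2 * π) * fresnelC (√(2 / π) * √t) * (2 * t + sin (2 * t))
    - √(2 * π) * fresnelS (√(2 / π) * √t) * cos (2 * t) - 2 * √t * sin t)

@[fun_prop]
theorem continuous_hcClosedForm : Continuous hcClosedForm := by
  unfold hcClosedForm; fun_prop

theorem hcClosedForm_zero : hcClosedForm 0 = 0 := by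
  simp [hcClosedForm, fresnelS]

theorem hasDerivAt_hcClosedForm {x : ℝ} (hx : 0 < x) :
    HasDerivAt hcClosedForm (abelCos x * cos x) x := by
  have hC : HasDerivAt (fun y => fresnelC (√(2 / π) * √y)) (cos x / (√(2 * π) * √x)) x :=
    hasDerivAt_integral_sqrt continuous_cos hx
  have hS : HasDerivAt (fun y => fresnelS (√(2 / π) * √y)) (sin x / (√(2 * π) * √x)) x :=
    hasDerivAt_integral_sqrt continuous_sin hx
  have hsqrt := hasDerivAt_sqrt hx.ne'
  have h2 : HasDerivAt (fun y : ℝ => 2 * y) 2 x := by simpa using (hasDerivAt_id x).const_mul 2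
  have h := (((hC.const_mul √(2 * π)).mul (h2.add h2.sin)).sub
    ((hS.const_mul √(2 * π)).mul h2.cos)).sub ((hsqrt.const_mul 2).mul (hasDerivAt_sin x))
    |>.const_mul (1/4)
  refine h.congr_deriv ?_
  simp only [Pi.add_apply]
  rw [abelCos_eq hx.le, sin_two_mul, cos_two_mul]
  have : 0 < √x := sqrt_pos.2 hx
  have : 0 < √(2 * π) := sqrt_pos.2 (by positivity)
  field_simp
  linear_combination (-2 * cos x) * sq_sqrt hx.le

/-- closed form for `H_c(t) = ∫_0^t h(s) cos s ds`. -/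
theorem Hc_closed_form (t : ℝ) (ht : 0 ≤ t) :
    (∫ s in (0:ℝ)..t, abelCos s * Real.cos s)
      = (1/4) * (Real.sqrt (2 * π) * fresnelC (Real.sqrt (2 / π) * Real.sqrt t)
            * (2 * t + Real.sin (2 * t))
          - Real.sqrt (2 * π) * fresnelS (Real.sqrt (2 / π) * Real.sqrt t)
            * Real.cos (2 * t)
          - 2 * Real.sqrt t * Real.sin t) := by
  have hint : IntervalIntegrable (fun s => abelCos s * cos s) volume 0 t :=
    ((continuousOn_abelCos.mono (by simp [Set.uIcc_of_le ht, Set.Icc_subset_Ici_self])).mul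
      continuous_cos.continuousOn).intervalIntegrable
  rw [integral_eq_sub_of_hasDeriv_right_of_le ht continuous_hcClosedForm.continuousOn
    (fun x hx => (hasDerivAt_hcClosedForm hx.1).hasDerivWithinAt) hint, hcClosedForm_zero,
    sub_zero, hcClosedForm]
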